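/- arXiv:1610.09651 — 4 statements merged into one kernel-verified Lean document; each statement's English description precedes it below -/
import Mathlib

section
/- Let n ≥ 1 and D ≥ 1 be integers and let P be an n×n stochastic matrix (nonnegative entries, each row summing to 1) with rational entries whose numerators and denominators, written in lowest terms, are at most D. Assume P is irreducible, i.e., for all indices i, j there exists k ≥ 1 with (P^k)_{ij} > 0. Then every invariant probability vector m of P (that is, m ∈ ℝⁿ with nonnegative entries summing to 1 and mᵀP = mᵀ) has rational entries, and there is a positive integer q with q ≤ n^{n/2} · D^{n²} such that q·m_i is an integer for every i. -/
/-!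
The invariant probability vector `m` is the unique solution of the square linear system obtained
from `mᵀ (P - 1) = 0` by replacing one equation with `∑ i, m i = 1`. Uniqueness is where
irreducibility enters: if `x` is invariant with `∑ i, x i = 0` but `x ≠ 0`, then `|x| - x` is a
nonnegative invariant vector that vanishes where `x > 0` and is positive where `x < 0`, which is
impossible once some power of `P` links a negative entry to a positive one. Multiplying column `j`
of `P - 1` by the product of the denominators in that column, at most `D ^ n`, makes the system
integral with entries bounded by `D ^ n`. For its matrix `C`, Cramer's rule makes `|det C| • m` an
integer vector, and Hadamard's inequality gives `|det C| ≤ n ^ (n / 2) * (D ^ n) ^ n`.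
-/

open Finset

open scoped RealInnerProductSpace

theorem exists_neg_of_sum_eq_zero {ι M : Type*} [Fintype ι] [AddCommMonoid M] [LinearOrder M]
    [IsOrderedAddMonoid M] {x : ι → M} (hsum : ∑ i, x i = 0) (hx : x ≠ 0) : ∃ i, x i < 0 := by
  by_contra! h
  exact hx (funext fun i => (sum_eq_zero_iff_of_nonneg fun i _ => h i).mp hsum i (mem_univ i))

theorem Rat.exists_int_eq_natCast_mul_of_den_dvd (q : ℚ) {k : ℕ} (h : q.den ∣ k) :
    ∃ z : ℤ, (k : ℚ) * q = z := by
  obtain ⟨t, rfl⟩ := h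
  exact ⟨t * q.num, by push_cast; rw [mul_comm (q.den : ℚ), mul_assoc, Rat.den_mul_eq_num]⟩

namespace Matrix

variable {ι : Type*} [Fintype ι] [DecidableEq ι]

theorem vecMul_pow_eq_self {R : Type*} [Semiring R] {P : Matrix ι ι R} {x : ι → R}
    (hx : x ᵥ* P = x) (k : ℕ) : x ᵥ* P ^ k = x := by
  induction k with
  | zero => simp
  | succ k ih => rw [pow_succ, ← vecMul_vecMul, ih, hx]

theorem det_smul_eq_adjugate_row_of_vecMul_eq_single {R : Type*} [CommRing R]
    {A : Matrix ι ι R} {x : ι → R} {j₀ : ι} (hx : x ᵥ* A = Pi.single j₀ 1) :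
    A.det • x = A.adjugate j₀ := by
  rw [← vecMul_one x, ← vecMul_smul, ← mul_adjugate, ← vecMul_vecMul, hx, single_one_vecMul]
  rfl

/-- The linear system `x ᵥ* invariantSystemMatrix P d j₀ = Pi.single j₀ 1` encodes
`x ᵥ* P = x` (column `j` scaled by `d j`) with the equation at `j₀` replaced by `∑ i, x i = 1`. -/
def invariantSystemMatrix {R : Type*} [Ring R] (P : Matrix ι ι R) (d : ι → R) (j₀ : ι) :
    Matrix ι ι R :=
  ((P - 1) * diagonal d).updateCol j₀ 1

theorem vecMul_invariantSystemMatrix {R : Type*} [CommRing R] (P : Matrix ι ι R) (d : ι → R)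
    (j₀ : ι) (x : ι → R) :
    x ᵥ* invariantSystemMatrix P d j₀ = Function.update ((x ᵥ* P - x) * d) j₀ (∑ i, x i) := by
  rw [invariantSystemMatrix, vecMul_updateCol, dotProduct_one, ← vecMul_vecMul, vecMul_sub,
    vecMul_one]
  congr 1
  exact funext (vecMul_diagonal _ _)

theorem vecMul_invariantSystemMatrix_eq_single {R : Type*} [CommRing R] {P : Matrix ι ι R}
    {x : ι → R} (d : ι → R) (j₀ : ι) (hx : x ᵥ* P = x) (hsum : ∑ i, x i = 1) :
    x ᵥ* invariantSystemMatrix P d j₀ = Pi.single j₀ 1 := by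
  rw [vecMul_invariantSystemMatrix, hx, sub_self, zero_mul, hsum]
  rfl

section Stochastic

variable {R : Type*} [CommRing R] [LinearOrder R] [IsStrictOrderedRing R] {P : Matrix ι ι R}
  {x : ι → R}

theorem sum_vecMul_of_mem_rowStochastic (hP : P ∈ rowStochastic R ι) (x : ι → R) :
    ∑ j, (x ᵥ* P) j = ∑ i, x i := by
  rw [← dotProduct_one, ← dotProduct_one, ← dotProduct_mulVec, one_vecMul_of_mem_rowStochastic hP]

theorem abs_vecMul_eq_self_of_mem_rowStochastic (hP : P ∈ rowStochastic R ι)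
    (hx : x ᵥ* P = x) : |x| ᵥ* P = |x| := by
  have hle : ∀ j, |x j| ≤ (|x| ᵥ* P) j := fun j => by
    conv_lhs => rw [← hx]
    calc |(x ᵥ* P) j| ≤ ∑ i, |x i * P i j| := abs_sum_le_sum_abs _ _
      _ = (|x| ᵥ* P) j := by
        simp only [vecMul, dotProduct, Pi.abs_apply, abs_mul, abs_of_nonneg (hP.1 _ _)]
  have hsum : ∑ j, |x j| = ∑ j, (|x| ᵥ* P) j := by
    rw [sum_vecMul_of_mem_rowStochastic hP]; rfl
  funext j
  exact ((sum_eq_sum_iff_of_le fun j _ => hle j).mp hsum j (mem_univ j)).symm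

theorem eq_zero_of_vecMul_eq_self_of_sum_eq_zero (hP : P ∈ rowStochastic R ι)
    (hirr : P.IsIrreducible) (hx : x ᵥ* P = x) (hsum : ∑ i, x i = 0) : x = 0 := by
  by_contra hx0
  obtain ⟨b, hb⟩ := exists_neg_of_sum_eq_zero hsum hx0
  obtain ⟨a, ha⟩ : ∃ a, 0 < x a := by
    simpa using exists_neg_of_sum_eq_zero (x := -x) (by simp [hsum]) (neg_ne_zero.mpr hx0)
  obtain ⟨k, -, hk⟩ :=
    (isIrreducible_iff_exists_pow_pos fun _ _ => nonneg_of_mem_rowStochastic hP).mp hirr b a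
  set w := |x| - x
  have hw : w ᵥ* P ^ k = w := by
    rw [sub_vecMul, vecMul_pow_eq_self hx,
      vecMul_pow_eq_self (abs_vecMul_eq_self_of_mem_rowStochastic hP hx)]
  have hw0 : ∀ i, 0 ≤ w i := fun i => sub_nonneg.mpr (le_abs_self (x i))
  have hPk : ∀ i j, 0 ≤ (P ^ k) i j := (pow_mem hP k).1
  have hba : w b * (P ^ k) b a ≤ w a :=
    calc w b * (P ^ k) b a ≤ (w ᵥ* P ^ k) a :=
          single_le_sum (f := fun i => w i * (P ^ k) i a)
            (fun i _ => mul_nonneg (hw0 i) (hPk i a)) (mem_univ b)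
      _ = w a := by rw [hw]
  have hwa : w a = 0 := by simp [w, abs_of_pos ha]
  have hwb : 0 < w b := by simp only [w, Pi.sub_apply, Pi.abs_apply, abs_of_neg hb]; linarith
  exact (mul_pos hwb hk).not_ge (hwa ▸ hba)

theorem det_invariantSystemMatrix_ne_zero (hP : P ∈ rowStochastic R ι) (hirr : P.IsIrreducible)
    {d : ι → R} (hd : ∀ j, d j ≠ 0) (j₀ : ι) : (invariantSystemMatrix P d j₀).det ≠ 0 := by
  intro hdet
  obtain ⟨y, hy0, hy⟩ := exists_vecMul_eq_zero_iff.mpr hdet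
  rw [vecMul_invariantSystemMatrix] at hy
  have hsum : ∑ i, y i = 0 := by simpa using congrFun hy j₀
  set u := y ᵥ* P - y
  have hu : ∀ j ≠ j₀, u j = 0 := fun j hj => by
    simpa [Function.update_of_ne hj, hd j] using congrFun hy j
  have hu₀ : u j₀ = 0 := by
    rw [← sum_eq_single_of_mem j₀ (mem_univ _) fun j _ hj => hu j hj]
    simp only [u, Pi.sub_apply, sum_sub_distrib, sum_vecMul_of_mem_rowStochastic hP, sub_self]
  have hinv : y ᵥ* P = y := by
    rw [← sub_eq_zero]
    funext j
    by_cases hj : j = j₀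
    · exact hj ▸ hu₀
    · exact hu j hj
  exact hy0 (eq_zero_of_vecMul_eq_self_of_sum_eq_zero hP hirr hinv hsum)

theorem abs_invariantSystemMatrix_apply_le (hP : P ∈ rowStochastic R ι) {d : ι → R} {B : R}
    (hd : ∀ j, |d j| ≤ B) (hB : 1 ≤ B) (j₀ i j : ι) : |invariantSystemMatrix P d j₀ i j| ≤ B := by
  by_cases hj : j = j₀
  · simpa [invariantSystemMatrix, hj] using hB
  have hPj : |P i j - (1 : Matrix ι ι R) i j| ≤ 1 :=
    abs_sub_le_of_nonneg_of_le (nonneg_of_mem_rowStochastic hP) (le_one_of_mem_rowStochastic hP)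
      (by rw [one_apply]; split_ifs <;> norm_num) (by rw [one_apply]; split_ifs <;> norm_num)
  rw [invariantSystemMatrix, updateCol_ne hj, mul_diagonal, sub_apply, abs_mul]
  calc |P i j - (1 : Matrix ι ι R) i j| * |d j| ≤ 1 * B :=
        mul_le_mul hPj (hd j) (abs_nonneg _) zero_le_one
    _ = B := one_mul B

end Stochastic

-- Gram–Schmidt needs a well-ordered, locally finite index type, hence the detour through `Fin n`.
theorem abs_det_le_prod_sqrt_sum_sq_fin {n : ℕ} (A : Matrix (Fin n) (Fin n) ℝ) :
    |A.det| ≤ ∏ i, √(∑ j, A i j ^ 2) := by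
  have hcard : Module.finrank ℝ (EuclideanSpace ℝ (Fin n)) = Fintype.card (Fin n) :=
    finrank_euclideanSpace
  let f : Fin n → EuclideanSpace ℝ (Fin n) := fun i => WithLp.toLp 2 (A i)
  let g := InnerProductSpace.gramSchmidtOrthonormalBasis hcard f
  let e := EuclideanSpace.basisFun (Fin n) ℝ
  have hdet : |A.det| = |(g.toBasis.toMatrix f).det| := by
    have hA : e.toBasis.toMatrix f = Aᵀ := by ext; rfl
    have hU : |(e.toBasis.toMatrix g.toBasis).det| = 1 := by
      simpa [Module.Basis.det_apply] using e.det_to_matrix_orthonormalBasis g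
    rw [← det_transpose A, ← hA, ← Module.Basis.toMatrix_mul_toMatrix _ g.toBasis, det_mul,
      abs_mul, hU, one_mul]
  have htri : (g.toBasis.toMatrix f).det = ∏ i, ⟪g i, f i⟫ := by
    simpa [Module.Basis.det_apply] using InnerProductSpace.gramSchmidtOrthonormalBasis_det hcard f
  rw [hdet, htri, abs_prod]
  refine prod_le_prod (fun i _ => abs_nonneg _) fun i _ => ?_
  calc |⟪g i, f i⟫| ≤ ‖g i‖ * ‖f i‖ := abs_real_inner_le_norm _ _
    _ = √(∑ j, A i j ^ 2) := by
      simp [g.orthonormal.1 i, EuclideanSpace.norm_eq, f]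

theorem abs_det_le_prod_sqrt_sum_sq (A : Matrix ι ι ℝ) :
    |A.det| ≤ ∏ i, √(∑ j, A i j ^ 2) := by
  let e := Fintype.equivFin ι
  have h := abs_det_le_prod_sqrt_sum_sq_fin (reindex e e A)
  simp only [reindex_apply, det_submatrix_equiv_self, submatrix_apply] at h
  rwa [Fintype.prod_equiv e.symm _ (fun i => √(∑ j, A i j ^ 2))
    fun i => by rw [e.symm.sum_comp fun j => A (e.symm i) j ^ 2]] at h

theorem abs_det_le_of_forall_abs_le (A : Matrix ι ι ℝ) {B : ℝ} (hB : ∀ i j, |A i j| ≤ B) :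
    |A.det| ≤ (Fintype.card ι : ℝ) ^ ((Fintype.card ι : ℝ) / 2) * B ^ Fintype.card ι := by
  set n := Fintype.card ι
  have hrow : ∀ i, √(∑ j, A i j ^ 2) ≤ √n * B := fun i => by
    have hB₀ : 0 ≤ B := (abs_nonneg _).trans (hB i i)
    calc √(∑ j, A i j ^ 2) ≤ √(∑ _j : ι, B ^ 2) :=
          Real.sqrt_le_sqrt (sum_le_sum fun j _ => sq_le_sq' (abs_le.mp (hB i j)).1
            (abs_le.mp (hB i j)).2)
      _ = √n * B := by
          rw [sum_const, card_univ, nsmul_eq_mul, Real.sqrt_mul (Nat.cast_nonneg _),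
            Real.sqrt_sq hB₀]
  calc |A.det| ≤ ∏ i, √(∑ j, A i j ^ 2) := abs_det_le_prod_sqrt_sum_sq A
    _ ≤ ∏ _i : ι, √n * B := prod_le_prod (fun i _ => Real.sqrt_nonneg _) fun i _ => hrow i
    _ = (n : ℝ) ^ ((n : ℝ) / 2) * B ^ n := by
      rw [prod_const, card_univ, mul_pow, Real.sqrt_eq_rpow, ← Real.rpow_mul_natCast
        (Nat.cast_nonneg _), one_div_mul_eq_div]

theorem exists_map_intCast_eq_invariantSystemMatrix {K : Type*} [Field K] [CharZero K]
    (Q : Matrix ι ι ℚ) (d : ι → ℕ) (hd : ∀ i j, (Q i j).den ∣ d j) (j₀ : ι) :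
    ∃ C : Matrix ι ι ℤ,
      C.map (↑) = invariantSystemMatrix (Q.map (↑) : Matrix ι ι K) (fun j => (d j : K)) j₀ := by
  suffices h : ∀ i j, ∃ z : ℤ,
      invariantSystemMatrix (Q.map (↑) : Matrix ι ι K) (fun j => (d j : K)) j₀ i j = z by
    choose C hC using h
    exact ⟨C, ext fun i j => (hC i j).symm⟩
  intro i j
  by_cases hj : j = j₀
  · exact ⟨1, by simp [invariantSystemMatrix, hj]⟩
  obtain ⟨z, hz⟩ := (Q i j).exists_int_eq_natCast_mul_of_den_dvd (hd i j)
  have hzK : (d j : K) * Q i j = z := by exact_mod_cast congrArg (Rat.cast : ℚ → K) hz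
  refine ⟨z - if i = j then (d j : ℤ) else 0, ?_⟩
  rw [invariantSystemMatrix, updateCol_ne hj, mul_diagonal, sub_apply, map_apply, one_apply,
    sub_mul, mul_comm, hzK]
  split_ifs <;> simp

theorem exists_int_eq_natAbs_det_mul_of_vecMul_eq_single {K : Type*} [CommRing K]
    (C : Matrix ι ι ℤ) {x : ι → K} {j₀ : ι} (hx : x ᵥ* C.map (↑) = Pi.single j₀ 1) (i : ι) :
    ∃ z : ℤ, (C.det.natAbs : K) * x i = z := by
  have h := det_smul_eq_adjugate_row_of_vecMul_eq_single hx
  rw [← Int.cast_det, show C.map Int.cast = (Int.castRingHom K).mapMatrix C from rfl,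
    ← RingHom.map_adjugate] at h
  refine ⟨C.det.sign * C.adjugate j₀ i, ?_⟩
  rw [← Int.cast_natCast, ← Int.sign_mul_self_eq_natAbs, Int.cast_mul, mul_assoc, Int.cast_mul]
  exact congrArg _ (congrFun h i)

theorem exists_common_denominator_of_vecMul_eq_self {P : Matrix ι ι ℝ}
    (hP : P ∈ rowStochastic ℝ ι) (hirr : P.IsIrreducible) (Q : Matrix ι ι ℚ)
    (hPQ : ∀ i j, P i j = Q i j) {B : ℕ} (hB : ∀ j, ∏ i, (Q i j).den ≤ B) {x : ι → ℝ}
    (hx : x ᵥ* P = x) (hsum : ∑ i, x i = 1) :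
    ∃ q : ℕ, 0 < q ∧
      (q : ℝ) ≤ (Fintype.card ι : ℝ) ^ ((Fintype.card ι : ℝ) / 2) * (B : ℝ) ^ Fintype.card ι ∧
      ∀ i, ∃ z : ℤ, (q : ℝ) * x i = z := by
  obtain ⟨j₀⟩ : Nonempty ι := by
    by_contra h
    simp [not_nonempty_iff.mp h] at hsum
  set d : ι → ℕ := fun j => ∏ i, (Q i j).den
  have hd : ∀ j, 0 < d j := fun j => prod_pos fun i _ => (Q i j).den_pos
  obtain ⟨C, hC⟩ := exists_map_intCast_eq_invariantSystemMatrix (K := ℝ) Q d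
    (fun i j => dvd_prod_of_mem _ (mem_univ i)) j₀
  rw [show Q.map (↑) = P from ext fun i j => (hPQ i j).symm] at hC
  have hdet : C.det ≠ 0 := by
    rw [← Int.cast_ne_zero (α := ℝ), Int.cast_det, hC]
    exact det_invariantSystemMatrix_ne_zero hP hirr (fun j => by simp [(hd j).ne']) j₀
  refine ⟨C.det.natAbs, Int.natAbs_pos.mpr hdet, ?_,
    exists_int_eq_natAbs_det_mul_of_vecMul_eq_single C
      (hC ▸ vecMul_invariantSystemMatrix_eq_single _ j₀ hx hsum)⟩
  rw [Nat.cast_natAbs, Int.cast_abs, Int.cast_det, hC]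
  refine abs_det_le_of_forall_abs_le _ (abs_invariantSystemMatrix_apply_le hP (B := B)
    (fun j => ?_) (by exact_mod_cast (hd j₀).trans_le (hB j₀)) j₀)
  simpa using (by exact_mod_cast hB j : (d j : ℝ) ≤ B)

end Matrix

open Matrix

theorem stmt12_general {n : ℕ} (D : ℕ)
    (P : Matrix (Fin n) (Fin n) ℝ)
    (hnonneg : ∀ i j, 0 ≤ P i j)
    (hrow : ∀ i, (∑ j, P i j) = 1)
    (hrat : ∀ i j, ∃ q : ℚ, P i j = (q : ℝ) ∧ q.num.natAbs ≤ D ∧ q.den ≤ D)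
    (hirr : ∀ i j, ∃ k : ℕ, 1 ≤ k ∧ 0 < (P ^ k) i j) :
    ∀ m : Fin n → ℝ,
      (∀ i, 0 ≤ m i) → (∑ i, m i) = 1 → (∀ j, ∑ i, m i * P i j = m j) →
      (∀ i, ∃ q : ℚ, m i = (q : ℝ)) ∧
      ∃ q : ℕ, 0 < q ∧ (q : ℝ) ≤ (n : ℝ) ^ ((n : ℝ) / 2) * (D : ℝ) ^ (n ^ 2) ∧
        ∀ i, ∃ z : ℤ, (q : ℝ) * m i = (z : ℝ) := by
  intro m _ hm hinv
  choose Q hPQ _ hQ using hrat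
  obtain ⟨q, hq, hbound, hint⟩ := exists_common_denominator_of_vecMul_eq_self
    (mem_rowStochastic_iff_sum.mpr ⟨hnonneg, hrow⟩)
    ((isIrreducible_iff_exists_pow_pos hnonneg).mpr hirr) (of Q) hPQ (B := D ^ n)
    (fun j => by simpa using prod_le_pow_card univ (fun i => (Q i j).den) D fun i _ => hQ i j)
    (funext hinv) hm
  refine ⟨fun i => ?_, q, hq, by simpa [← pow_mul, sq] using hbound, hint⟩
  obtain ⟨z, hz⟩ := hint i
  exact ⟨z / q, by push_cast; exact eq_div_of_mul_eq (by positivity) (by rw [mul_comm, hz])⟩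

/-- bound on the denominators of the invariant probability vector of an
irreducible stochastic matrix with rational entries whose numerators and denominators
(in lowest terms) are at most `D`: the common denominator is at most `n^{n/2} · D^{n²}`. -/
theorem stmt12 {n : ℕ} (hn : 0 < n) (D : ℕ) (hD : 1 ≤ D)
    (P : Matrix (Fin n) (Fin n) ℝ)
    (hnonneg : ∀ i j, 0 ≤ P i j)
    (hrow : ∀ i, (∑ j, P i j) = 1)
    (hrat : ∀ i j, ∃ q : ℚ, P i j = (q : ℝ) ∧ q.num.natAbs ≤ D ∧ q.den ≤ D)
    (hirr : ∀ i j, ∃ k : ℕ, 1 ≤ k ∧ 0 < (P ^ k) i j) :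
    ∀ m : Fin n → ℝ,
      (∀ i, 0 ≤ m i) → (∑ i, m i) = 1 → (∀ j, ∑ i, m i * P i j = m j) →
      (∀ i, ∃ q : ℚ, m i = (q : ℝ)) ∧
      ∃ q : ℕ, 0 < q ∧ (q : ℝ) ≤ (n : ℝ) ^ ((n : ℝ) / 2) * (D : ℝ) ^ (n ^ 2) ∧
        ∀ i, ∃ z : ℤ, (q : ℝ) * m i = (z : ℝ) :=
  stmt12_general D P hnonneg hrow hrat hirr
end

section
/- Let T : ℝⁿ → ℝⁿ be additively homogeneous, let M ≥ 0, and define T_M : ℝⁿ × ℝⁿ → ℝⁿ × ℝⁿ by T_M(x, y) = ( T(y), R_M(x) ). Then: (i) if v ∈ ℝⁿ and λ ∈ ℝ satisfy T(R_M(v)) = λe + v, then the pair ( v, R_M(v) − (λ/2)e ) is a bias vector of T_M with eigenvalue λ/2, i.e., T_M( v, R_M(v) − (λ/2)e ) = (λ/2)·(e,e) + ( v, R_M(v) − (λ/2)e ); (ii) conversely, if T_M(x, y) = μ·(e,e) + (x, y) for some μ ∈ ℝ, then T(R_M(x)) = 2μ·e + x and y = R_M(x) − μe. (Thus all bias vectors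 of T_M arise as in (i).) -/
/-! Additive homogeneity of `T` moves the constant `λ/2` (resp. `μ`) through `T`, so the two
half-steps of `T_M` compose to one step of `T ∘ R_M` with twice the shift. No property of `R_M`
enters, so the lemmas are stated for an arbitrary map `R`. -/

noncomputable def RM {n : ℕ} (M : ℝ) (x : Fin n → ℝ) : Fin n → ℝ :=
  fun i => max (x i) (⨆ j, (-M + x j))

section AdditivelyHomogeneous

variable {ι : Type*} {T R : (ι → ℝ) → (ι → ℝ)}

theorem map_sub_const_of_additivelyHomogeneous
    (hT : ∀ (x : ι → ℝ) (c : ℝ), T (x + fun _ => c) = T x + fun _ => c)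
    (x : ι → ℝ) (c : ℝ) : T (x - fun _ => c) = T x - fun _ => c := by
  rw [sub_eq_add_neg, sub_eq_add_neg]
  exact hT x (-c)

theorem map_sub_half_of_bias_comp
    (hT : ∀ (x : ι → ℝ) (c : ℝ), T (x + fun _ => c) = T x + fun _ => c)
    {v : ι → ℝ} {lam : ℝ} (hv : T (R v) = (fun _ => lam) + v) :
    T (R v - fun _ => lam / 2) = (fun _ => lam / 2) + v := by
  rw [map_sub_const_of_additivelyHomogeneous hT, hv]
  funext i
  simp only [Pi.add_apply, Pi.sub_apply]
  ring

theorem bias_comp_of_map_eq_add_const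
    (hT : ∀ (x : ι → ℝ) (c : ℝ), T (x + fun _ => c) = T x + fun _ => c)
    {x y : ι → ℝ} {mu : ℝ} (hTy : T y = (fun _ => mu) + x) (hRx : R x = (fun _ => mu) + y) :
    T (R x) = (fun _ => 2 * mu) + x := by
  rw [hRx, add_comm, hT, hTy]
  funext i
  simp only [Pi.add_apply]
  ring

end AdditivelyHomogeneous

theorem stmt13_general {n : ℕ} (M : ℝ)
    (T : (Fin n → ℝ) → (Fin n → ℝ))
    (hhom : ∀ (x : Fin n → ℝ) (c : ℝ), T (x + fun _ => c) = T x + fun _ => c)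
    (TM : (Fin n → ℝ) × (Fin n → ℝ) → (Fin n → ℝ) × (Fin n → ℝ))
    (hTM : TM = fun p => (T p.2, RM M p.1)) :
    (∀ (v : Fin n → ℝ) (lam : ℝ), T (RM M v) = (fun _ => lam) + v →
      TM (v, RM M v - fun _ => lam / 2) =
        ((fun _ => lam / 2) + v,
          (fun _ => lam / 2) + (RM M v - fun _ => lam / 2))) ∧
    (∀ (x y : Fin n → ℝ) (mu : ℝ),
      TM (x, y) = ((fun _ => mu) + x, (fun _ => mu) + y) →
      T (RM M x) = (fun _ => 2 * mu) + x ∧ y = RM M x - fun _ => mu) := by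
  subst hTM
  refine ⟨fun v lam hv => ?_, fun x y mu h => ?_⟩
  · exact Prod.ext (map_sub_half_of_bias_comp hhom hv) (add_sub_cancel _ _).symm
  · obtain ⟨hTy, hRx⟩ := Prod.mk.inj h
    exact ⟨bias_comp_of_map_eq_add_const hhom hTy hRx, eq_sub_of_add_eq' hRx.symm⟩

/-- correspondence between the bias vectors of `T ∘ R_M` and those of the
doubled operator `T_M(x,y) = (T(y), R_M(x))`. -/
theorem stmt13 {n : ℕ} (hn : 0 < n) (M : ℝ) (hM : 0 ≤ M)
    (T : (Fin n → ℝ) → (Fin n → ℝ))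
    (hhom : ∀ (x : Fin n → ℝ) (c : ℝ), T (x + fun _ => c) = T x + fun _ => c)
    (TM : (Fin n → ℝ) × (Fin n → ℝ) → (Fin n → ℝ) × (Fin n → ℝ))
    (hTM : TM = fun p => (T p.2, RM M p.1)) :
    (∀ (v : Fin n → ℝ) (lam : ℝ), T (RM M v) = (fun _ => lam) + v →
      TM (v, RM M v - fun _ => lam / 2) =
        ((fun _ => lam / 2) + v,
          (fun _ => lam / 2) + (RM M v - fun _ => lam / 2))) ∧
    (∀ (x y : Fin n → ℝ) (mu : ℝ),
      TM (x, y) = ((fun _ => mu) + x, (fun _ => mu) + y) →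
      T (RM M x) = (fun _ => 2 * mu) + x ∧ y = RM M x - fun _ => mu) :=
  stmt13_general M T hhom TM hTM
end

section
/- Let T : ℝⁿ → ℝⁿ be a perfect-information finite Shapley operator and for ε ≥ 0 set g_ε = (ε, ε², …, εⁿ) ∈ ℝⁿ. Then there exist ε₁ > 0, a policy σ of player Min, a policy τ of player Max, and an invariant probability vector m ∈ M(P^{στ}) such that for all ε ∈ [0, ε₁]: min_{σ'} max { ⟨m', g_ε + r^{σ'τ'}⟩ : τ' a policy of player Max, m' ∈ M(P^{σ'τ'}) } = ⟨m, g_ε + r^{στ}⟩, where the minimum is over all policies σ' of player Min. (This common value equals the upper mean payoff 𝜒̄(g_ε + T).) -/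
/-- Perfect-information finite Shapley operator. -/
noncomputable def shapleyOp {n : ℕ} (A : Fin n → Type) [∀ i, Fintype (A i)] [∀ i, Nonempty (A i)]
    (B : ∀ i, A i → Type) [∀ i a, Fintype (B i a)] [∀ i a, Nonempty (B i a)]
    (r : ∀ i, ∀ a : A i, B i a → ℝ) (P : ∀ i, ∀ a : A i, B i a → Fin n → ℝ) :
    (Fin n → ℝ) → (Fin n → ℝ) :=
  fun x i => ⨅ a : A i, ⨆ b : B i a, (r i a b + ∑ j, P i a b j * x j)

/-- `m` is an invariant probability vector of the stochastic matrix `Q` (rows `Q i`). -/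
def isInvProb {n : ℕ} (Q : Fin n → Fin n → ℝ) (m : Fin n → ℝ) : Prop :=
  (∀ i, 0 ≤ m i) ∧ (∑ i, m i) = 1 ∧ ∀ j, ∑ i, m i * Q i j = m j

open Filter Topology Polynomial Matrix Finset

/-!
For fixed policies and a fixed invariant vector `m`, the payoff `⟨m, g_ε + r⟩` is a polynomial
in `ε`, and any two polynomials are ordered on some interval `[0, δ]`. The invariant probability
vectors of a stochastic matrix form a nonempty polytope (a cluster point of Cesàro averages)
with finitely many extreme points (an extreme point is determined by its support), and a linear
functional on it is maximised at an extreme point. Hence Max's best reply to each `σ'` is the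
largest of finitely many polynomials near `0⁺`, realised by one `(τ, m)`; Min then picks the
`σ` whose best-reply polynomial is smallest near `0⁺`.
-/

theorem Polynomial.eventually_nonneg_or_eventually_nonpos_nhdsGE (p : ℝ[X]) (a : ℝ) :
    (∀ᶠ x in 𝓝[≥] a, 0 ≤ p.eval x) ∨ ∀ᶠ x in 𝓝[≥] a, p.eval x ≤ 0 := by
  rcases eq_or_ne p 0 with rfl | hp
  · simp
  obtain ⟨q, hpq, hq⟩ := p.exists_eq_pow_rootMultiplicity_mul_and_not_dvd hp a
  replace hq : q.eval a ≠ 0 := by rwa [dvd_iff_isRoot] at hq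
  have hpow : ∀ᶠ x in 𝓝[≥] a, 0 ≤ ((X - C a) ^ p.rootMultiplicity a).eval x :=
    eventually_nhdsWithin_of_forall fun x hx => by simpa using pow_nonneg (sub_nonneg.2 hx) _
  have hq_lim : Tendsto q.eval (𝓝[≥] a) (𝓝 (q.eval a)) :=
    q.continuous.continuousWithinAt.tendsto
  rw [hpq]
  rcases hq.lt_or_gt with hneg | hpos
  · right
    filter_upwards [hpow, hq_lim.eventually (gt_mem_nhds hneg)] with x h₁ h₂
    simpa only [eval_mul] using mul_nonpos_of_nonneg_of_nonpos h₁ h₂.le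
  · left
    filter_upwards [hpow, hq_lim.eventually (lt_mem_nhds hpos)] with x h₁ h₂
    simpa only [eval_mul] using mul_nonneg h₁ h₂.le

theorem Polynomial.eval_eventuallyLE_total_nhdsGE (p q : ℝ[X]) (a : ℝ) :
    p.eval ≤ᶠ[𝓝[≥] a] q.eval ∨ q.eval ≤ᶠ[𝓝[≥] a] p.eval := by
  refine (eventually_nonneg_or_eventually_nonpos_nhdsGE (q - p) a).imp
    (fun h => ?_) (fun h => ?_) <;>
  · filter_upwards [h] with x hx
    rw [eval_sub] at hx
    linarith

theorem Filter.exists_eventually_forall_le_of_total {α ι β : Type*} [Finite ι] [Nonempty ι]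
    [Preorder β] {l : Filter α} (f : ι → α → β) (htotal : ∀ i j, f i ≤ᶠ[l] f j ∨ f j ≤ᶠ[l] f i) :
    ∃ i, ∀ᶠ x in l, ∀ j, f j x ≤ f i x := by
  obtain ⟨i, -, hi⟩ := Set.finite_univ.exists_maximalFor (fun i => (f i : Germ l β))
    Set.univ Set.univ_nonempty
  refine ⟨i, eventually_all.2 fun j => ?_⟩
  rcases htotal i j with hij | hji
  · exact Germ.coe_le.1 (hi (Set.mem_univ j) (Germ.coe_le.2 hij))
  · exact hji

/-- Cesàro means of an orbit are almost fixed, so any of their cluster points is fixed. -/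
theorem ContinuousLinearMap.exists_mem_fixedPoint_of_mapsTo {E : Type*} [NormedAddCommGroup E]
    [NormedSpace ℝ E] (L : E →L[ℝ] E) {K : Set E} (hK : IsCompact K) (hKconv : Convex ℝ K)
    (hne : K.Nonempty) (hLK : Set.MapsTo L K K) : ∃ x ∈ K, L x = x := by
  obtain ⟨x₀, hx₀⟩ := hne
  have horbit : ∀ k, L^[k] x₀ ∈ K := fun k => hLK.iterate k hx₀
  set avg : ℕ → E := fun N => (1 / ((N : ℝ) + 1)) • ∑ k ∈ range (N + 1), L^[k] x₀
  have havg_mem : ∀ N, avg N ∈ K := fun N => by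
    simp only [avg, smul_sum]
    refine hKconv.sum_mem (fun _ _ => by positivity) ?_ fun k _ => horbit k
    simp only [sum_const, card_range, nsmul_eq_mul, Nat.cast_add, Nat.cast_one]
    field_simp
  have hdefect : ∀ N, L (avg N) - avg N = (1 / ((N : ℝ) + 1)) • (L^[N + 1] x₀ - x₀) := fun N => by
    simp only [avg, map_smul, map_sum, ← smul_sub, ← sum_sub_distrib,
      ← Function.iterate_succ_apply' L, sum_range_sub (fun k => L^[k] x₀),
      Function.iterate_zero_apply]
  obtain ⟨C, hC⟩ := isBounded_iff_forall_norm_le.1 hK.isBounded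
  have hdefect_lim : Tendsto (fun N => L (avg N) - avg N) atTop (𝓝 0) := by
    simp_rw [hdefect]
    exact tendsto_one_div_add_atTop_nhds_zero_nat.zero_smul_isBoundedUnder_le
      (isBoundedUnder_of ⟨C + C, fun N =>
        (norm_sub_le _ _).trans (add_le_add (hC _ (horbit _)) (hC _ hx₀))⟩)
  obtain ⟨x, hx, φ, hφ, hlim⟩ := hK.tendsto_subseq havg_mem
  refine ⟨x, hx, sub_eq_zero.1 (tendsto_nhds_unique ?_ (hdefect_lim.comp hφ.tendsto_atTop))⟩
  exact ((L.continuous.tendsto x).comp hlim).sub hlim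

theorem IsCompact.exists_mem_extremePoints_isMaxOn {E : Type*} [AddCommGroup E] [Module ℝ E]
    [TopologicalSpace E] [T2Space E] [IsTopologicalAddGroup E] [ContinuousSMul ℝ E]
    [LocallyConvexSpace ℝ E] {s : Set E} (hs : IsCompact s) (hne : s.Nonempty)
    (l : StrongDual ℝ E) : ∃ x ∈ s.extremePoints ℝ, IsMaxOn l s x := by
  have hexp : IsExposed ℝ s {y ∈ s | ∀ z ∈ s, l z ≤ l y} := fun _ => ⟨l, rfl⟩
  obtain ⟨z, hz, hmax⟩ := hs.exists_isMaxOn hne l.continuous.continuousOn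
  obtain ⟨x, hx⟩ := (hexp.isCompact hs).extremePoints_nonempty ⟨z, hz, fun w hw => hmax hw⟩
  exact ⟨x, hexp.isExtreme.extremePoints_subset_extremePoints hx, fun z hz => hx.1.2 z hz⟩

theorem Matrix.vecMul_mem_stdSimplex {ι : Type*} [Fintype ι] [DecidableEq ι]
    {Q : Matrix ι ι ℝ} (hQ : Q ∈ rowStochastic ℝ ι) {x : ι → ℝ} (hx : x ∈ stdSimplex ℝ ι) :
    x ᵥ* Q ∈ stdSimplex ℝ ι := by
  refine ⟨nonneg_vecMul_of_mem_rowStochastic hQ hx.1, ?_⟩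
  have := vecMul_dotProduct_one_eq_one_rowStochastic hQ (by rw [dotProduct_one]; exact hx.2)
  rwa [dotProduct_one] at this

theorem Matrix.exists_mem_stdSimplex_vecMul_eq {ι : Type*} [Fintype ι] [DecidableEq ι]
    [Nonempty ι] {Q : Matrix ι ι ℝ} (hQ : Q ∈ rowStochastic ℝ ι) :
    ∃ m ∈ stdSimplex ℝ ι, m ᵥ* Q = m :=
  (vecMulLinear Q).toContinuousLinearMap.exists_mem_fixedPoint_of_mapsTo
    (isCompact_stdSimplex ℝ ι) (convex_stdSimplex ℝ ι)
    ⟨_, single_mem_stdSimplex ℝ (Classical.arbitrary ι)⟩ fun _ hx => vecMul_mem_stdSimplex hQ hx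

theorem eq_of_mem_extremePoints_of_support_subset {ι : Type*} [Finite ι] {C : Set (ι → ℝ)}
    (hnonneg : ∀ x ∈ C, 0 ≤ x)
    (haffine : ∀ x ∈ C, ∀ y ∈ C, ∀ a b : ℝ, a + b = 1 → 0 ≤ a • x + b • y → a • x + b • y ∈ C)
    {m m' : ι → ℝ} (hm : m ∈ C.extremePoints ℝ) (hm' : m' ∈ C)
    (hsupp : Function.support m' ⊆ Function.support m) : m' = m := by
  -- `m` lies strictly between `m'` and `m + t • (m - m')`, which stays in `C` for small `t > 0`
  have hpush : ∀ᶠ t in 𝓝 (0 : ℝ), 0 ≤ (1 + t) • m + (-t) • m' := by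
    simp only [Pi.le_def, eventually_all]
    intro i
    rcases (hnonneg m hm.1 i).eq_or_lt with hi | hi
    · have hi' : m' i = 0 := by_contra fun h => hsupp h hi.symm
      simp [← hi, hi']
    · have hlim : Tendsto (fun t : ℝ => ((1 + t) • m + (-t) • m') i) (𝓝 0) (𝓝 (m i)) := by
        have hcont : Continuous fun t : ℝ => ((1 + t) • m + (-t) • m') i := by fun_prop
        simpa using hcont.tendsto 0
      exact (hlim.eventually (lt_mem_nhds hi)).mono fun _ => le_of_lt
  obtain ⟨t, ht, ht0⟩ := ((hpush.filter_mono nhdsWithin_le_nhds).and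
    (self_mem_nhdsWithin (s := Set.Ioi 0))).exists
  have ht0 : (0 : ℝ) < t := ht0
  have hy := haffine m hm.1 m' hm' (1 + t) (-t) (by ring) ht
  refine hm.2 hm' hy ⟨t / (1 + t), 1 / (1 + t), by positivity, by positivity,
    by field_simp; ring, ?_⟩
  ext i
  simp only [Pi.add_apply, Pi.smul_apply, smul_eq_mul]
  field_simp
  ring

theorem finite_extremePoints_of_nonneg_of_affine {ι : Type*} [Finite ι] {C : Set (ι → ℝ)}
    (hnonneg : ∀ x ∈ C, 0 ≤ x)
    (haffine : ∀ x ∈ C, ∀ y ∈ C, ∀ a b : ℝ, a + b = 1 → 0 ≤ a • x + b • y → a • x + b • y ∈ C) :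
    (C.extremePoints ℝ).Finite :=
  Set.Finite.of_finite_image (f := Function.support) (Set.toFinite _) fun _ hm _ hm' hsupp =>
    eq_of_mem_extremePoints_of_support_subset hnonneg haffine hm' hm.1 hsupp.le

theorem isInvProb_iff {n : ℕ} (Q : Matrix (Fin n) (Fin n) ℝ) (m : Fin n → ℝ) :
    isInvProb Q m ↔ m ∈ stdSimplex ℝ (Fin n) ∧ m ᵥ* Q = m := by
  simp only [isInvProb, stdSimplex, Set.mem_ofPred_eq, funext_iff, vecMul, dotProduct, and_assoc]

theorem exists_isInvProb {n : ℕ} (hn : 0 < n) {Q : Matrix (Fin n) (Fin n) ℝ}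
    (hQ : Q ∈ rowStochastic ℝ (Fin n)) : ∃ m, isInvProb Q m := by
  have : Nonempty (Fin n) := ⟨⟨0, hn⟩⟩
  obtain ⟨m, hm⟩ := exists_mem_stdSimplex_vecMul_eq hQ
  exact ⟨m, (isInvProb_iff Q m).2 hm⟩

theorem isCompact_setOf_isInvProb {n : ℕ} (Q : Matrix (Fin n) (Fin n) ℝ) :
    IsCompact {m | isInvProb Q m} := by
  simp only [isInvProb_iff]
  exact (isCompact_stdSimplex ℝ _).inter_right (isClosed_eq (by fun_prop) continuous_id)

theorem isInvProb.smul_add_smul {n : ℕ} {Q : Matrix (Fin n) (Fin n) ℝ} {x y : Fin n → ℝ}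
    (hx : isInvProb Q x) (hy : isInvProb Q y) {a b : ℝ} (hab : a + b = 1)
    (hnonneg : 0 ≤ a • x + b • y) : isInvProb Q (a • x + b • y) := by
  rw [isInvProb_iff] at hx hy ⊢
  refine ⟨⟨hnonneg, ?_⟩, ?_⟩
  · simp only [Pi.add_apply, Pi.smul_apply, smul_eq_mul, sum_add_distrib, ← mul_sum, hx.1.2,
      hy.1.2, hab, mul_one]
  · rw [add_vecMul, smul_vecMul, smul_vecMul, hx.2, hy.2]

theorem finite_extremePoints_setOf_isInvProb {n : ℕ} (Q : Matrix (Fin n) (Fin n) ℝ) :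
    ({m | isInvProb Q m}.extremePoints ℝ).Finite :=
  finite_extremePoints_of_nonneg_of_affine (fun _ hx => hx.1)
    fun _ hx _ hy _ _ hab hnonneg => hx.smul_add_smul hy hab hnonneg

/-- `g_ε + ρ` with `g_ε = (ε, ε², …, εⁿ)`. -/
def perturbedReward {n : ℕ} (ρ : Fin n → ℝ) (ε : ℝ) : Fin n → ℝ :=
  fun i => ε ^ ((i : ℕ) + 1) + ρ i

theorem dotProduct_perturbedReward_eventuallyLE_total {n : ℕ} (m ρ m' ρ' : Fin n → ℝ) :
    (fun ε => m ⬝ᵥ perturbedReward ρ ε) ≤ᶠ[𝓝[≥] 0] (fun ε => m' ⬝ᵥ perturbedReward ρ' ε) ∨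
      (fun ε => m' ⬝ᵥ perturbedReward ρ' ε) ≤ᶠ[𝓝[≥] 0] (fun ε => m ⬝ᵥ perturbedReward ρ ε) := by
  have hpoly : ∀ m ρ : Fin n → ℝ, ∃ p : ℝ[X], p.eval = fun ε => m ⬝ᵥ perturbedReward ρ ε :=
    fun m ρ => ⟨∑ i, C (m i) * (X ^ ((i : ℕ) + 1) + C (ρ i)), funext fun ε => by
      simp [eval_finsetSum, dotProduct, perturbedReward]⟩
  obtain ⟨p, hp⟩ := hpoly m ρ
  obtain ⟨q, hq⟩ := hpoly m' ρ'
  rw [← hp, ← hq]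
  exact eval_eventuallyLE_total_nhdsGE p q 0

theorem exists_isInvProb_eventually_forall_dotProduct_perturbedReward_le {κ : Type*} [Finite κ]
    [Nonempty κ] {n : ℕ} (hn : 0 < n) (Q : κ → Matrix (Fin n) (Fin n) ℝ)
    (hQ : ∀ k, Q k ∈ rowStochastic ℝ (Fin n)) (ρ : κ → Fin n → ℝ) :
    ∃ k m, isInvProb (Q k) m ∧ ∀ᶠ ε in 𝓝[≥] 0, ∀ k' m', isInvProb (Q k') m' →
      m' ⬝ᵥ perturbedReward (ρ k') ε ≤ m ⬝ᵥ perturbedReward (ρ k) ε := by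
  -- only finitely many extreme points, hence finitely many polynomial payoffs, compete
  let ext k := {m | isInvProb (Q k) m}.extremePoints ℝ
  have : ∀ k, Finite (ext k) := fun k => (finite_extremePoints_setOf_isInvProb (Q k)).to_subtype
  have : Nonempty (Σ k, ext k) := by
    obtain ⟨k⟩ := ‹Nonempty κ›
    obtain ⟨m, hm⟩ :=
      (isCompact_setOf_isInvProb (Q k)).extremePoints_nonempty (exists_isInvProb hn (hQ k))
    exact ⟨⟨k, m, hm⟩⟩
  obtain ⟨⟨k, m, hm⟩, hmax⟩ := exists_eventually_forall_le_of_total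
    (fun km : Σ k, ext k => fun ε => km.2.1 ⬝ᵥ perturbedReward (ρ km.1) ε)
    fun _ _ => dotProduct_perturbedReward_eventuallyLE_total _ _ _ _
  refine ⟨k, m, hm.1, hmax.mono fun ε hε k' m' hm' => ?_⟩
  obtain ⟨x, hx, hxmax⟩ := (isCompact_setOf_isInvProb (Q k')).exists_mem_extremePoints_isMaxOn
    ⟨m', hm'⟩ (dotProductBilin ℝ ℝ (perturbedReward (ρ k') ε)).toContinuousLinearMap
  calc m' ⬝ᵥ perturbedReward (ρ k') ε ≤ x ⬝ᵥ perturbedReward (ρ k') ε := by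
        simpa [dotProduct_comm] using hxmax hm'
    _ ≤ m ⬝ᵥ perturbedReward (ρ k) ε := hε ⟨k', x, hx⟩

theorem stmt15_general {n : ℕ} (hn : 0 < n)
    (A : Fin n → Type) [∀ i, Fintype (A i)] [∀ i, Nonempty (A i)]
    (B : ∀ i, A i → Type) [∀ i a, Fintype (B i a)] [∀ i a, Nonempty (B i a)]
    (r : ∀ i, ∀ a : A i, B i a → ℝ) (P : ∀ i, ∀ a : A i, B i a → Fin n → ℝ)
    (hP : ∀ i a b, (∀ j, 0 ≤ P i a b j) ∧ ∑ j, P i a b j = 1) :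
    ∃ (ε₁ : ℝ), 0 < ε₁ ∧
    ∃ (σ : ∀ i, A i) (τ : ∀ i, ∀ a : A i, B i a) (m : Fin n → ℝ),
      isInvProb (fun i j => P i (σ i) (τ i (σ i)) j) m ∧
      ∀ ε : ℝ, 0 ≤ ε → ε ≤ ε₁ →
        (⨅ σ' : ∀ i, A i, sSup {v : ℝ |
            ∃ (τ' : ∀ i, ∀ a : A i, B i a) (m' : Fin n → ℝ),
              isInvProb (fun i j => P i (σ' i) (τ' i (σ' i)) j) m' ∧
              v = ∑ i, m' i * (ε ^ ((i : ℕ) + 1) + r i (σ' i) (τ' i (σ' i)))}) =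
          ∑ i, m i * (ε ^ ((i : ℕ) + 1) + r i (σ i) (τ i (σ i))) := by
  have hQ : ∀ (σ' : ∀ i, A i) (τ' : ∀ i, ∀ a : A i, B i a),
      (fun i j => P i (σ' i) (τ' i (σ' i)) j) ∈ rowStochastic ℝ (Fin n) := fun σ' τ' =>
    mem_rowStochastic_iff_sum.2 ⟨fun i => (hP i _ _).1, fun i => (hP i _ _).2⟩
  choose τ m hm hτ using fun σ' : ∀ i, A i =>
    exists_isInvProb_eventually_forall_dotProduct_perturbedReward_le hn _ (hQ σ')
      fun τ' i => r i (σ' i) (τ' i (σ' i))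
  set value : (∀ i, A i) → ℝ → ℝ :=
    fun σ' ε => m σ' ⬝ᵥ perturbedReward (fun i => r i (σ' i) (τ σ' i (σ' i))) ε
  obtain ⟨σ, hσ⟩ := exists_eventually_forall_le_of_total (β := ℝᵒᵈ) (l := 𝓝[≥] 0)
    (fun σ' ε => OrderDual.toDual (value σ' ε))
    fun _ _ => (dotProduct_perturbedReward_eventuallyLE_total _ _ _ _).symm
  have hsup : ∀ᶠ ε in 𝓝[≥] 0, ∀ σ', sSup {v : ℝ | ∃ (τ' : ∀ i, ∀ a : A i, B i a) (m' : Fin n → ℝ),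
      isInvProb (fun i j => P i (σ' i) (τ' i (σ' i)) j) m' ∧
      v = ∑ i, m' i * (ε ^ ((i : ℕ) + 1) + r i (σ' i) (τ' i (σ' i)))} = value σ' ε :=
    eventually_all.2 fun σ' => (hτ σ').mono fun ε hε => IsGreatest.csSup_eq
      ⟨⟨τ σ', m σ', hm σ', rfl⟩, by rintro _ ⟨τ', m', hm', rfl⟩; exact hε τ' m' hm'⟩
  obtain ⟨ε₁, hε₁, h⟩ := nhdsGE_basis_Icc.eventually_iff.1 (hsup.and hσ)
  refine ⟨ε₁, hε₁, σ, τ σ, m σ, hm σ, fun ε hε0 hε1 => ?_⟩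
  obtain ⟨hsupε, hσε⟩ := h ⟨hε0, hε1⟩
  simp_rw [hsupε]
  exact le_antisymm (ciInf_le (Set.finite_range _).bddBelow σ) (le_ciInf hσε)

/-- along the perturbation curve `ε ↦ g_ε = (ε, …, εⁿ)`, for all `ε` small
enough, the upper mean payoff `𝜒̄(g_ε + T)`, given by the min–max formula, is attained by
a fixed pair of policies `(σ, τ)` and a fixed invariant probability vector `m`. -/
theorem stmt15 {n : ℕ} (hn : 0 < n)
    (A : Fin n → Type) [∀ i, Fintype (A i)] [∀ i, Nonempty (A i)]
    (B : ∀ i, A i → Type) [∀ i a, Fintype (B i a)] [∀ i a, Nonempty (B i a)]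
    (r : ∀ i, ∀ a : A i, B i a → ℝ) (P : ∀ i, ∀ a : A i, B i a → Fin n → ℝ)
    (hP : ∀ i a b, (∀ j, 0 ≤ P i a b j) ∧ ∑ j, P i a b j = 1)
    (T : (Fin n → ℝ) → (Fin n → ℝ)) (hT : T = shapleyOp A B r P) :
    ∃ (ε₁ : ℝ), 0 < ε₁ ∧
    ∃ (σ : ∀ i, A i) (τ : ∀ i, ∀ a : A i, B i a) (m : Fin n → ℝ),
      isInvProb (fun i j => P i (σ i) (τ i (σ i)) j) m ∧
      ∀ ε : ℝ, 0 ≤ ε → ε ≤ ε₁ →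
        (⨅ σ' : ∀ i, A i, sSup {v : ℝ |
            ∃ (τ' : ∀ i, ∀ a : A i, B i a) (m' : Fin n → ℝ),
              isInvProb (fun i j => P i (σ' i) (τ' i (σ' i)) j) m' ∧
              v = ∑ i, m' i * (ε ^ ((i : ℕ) + 1) + r i (σ' i) (τ' i (σ' i)))}) =
          ∑ i, m i * (ε ^ ((i : ℕ) + 1) + r i (σ i) (τ i (σ i))) :=
  stmt15_general hn A B r P hP
end

section
/- Let T : ℝⁿ → ℝⁿ be a perfect-information finite Shapley operator admitting an invariant half-line: T(u + αν) = u + (α+1)ν for some u, ν ∈ ℝⁿ and all α ≥ α₀. Then there exist a policy σ* of player Min, a policy τ* of player Max, and α₁ ≥ α₀ such that for all α ≥ α₁: T(u + αν) = T^{σ*}(u + αν) = {}^{τ*}T(u + αν) = u + (α+1)ν. -/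
/-!
Along the half-line `x = u + α • ν` every payoff `r i a b + ⟨P i a b, x⟩` is an affine
function of `α`. Among finitely many affine functions one is eventually the largest (resp.
smallest), namely the lexicographic maximum (resp. minimum) of (slope, intercept). Choosing
for Max an eventually optimal reply `τ* i a` in every state and to every action, and then for
Min an eventually optimal action `σ* i` against `τ*`, the min–max defining `T` is eventually
attained at `(σ* i, τ* i (σ* i))`, which gives both reduced operators.
-/

open Filter

section AffineArgmax

variable {𝕜 ι : Type*} [Field 𝕜] [LinearOrder 𝕜] [IsStrictOrderedRing 𝕜]
  [Finite ι] [Nonempty ι]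

theorem exists_eventually_forall_affine_le (c d : ι → 𝕜) :
    ∃ k, ∀ᶠ t in atTop, ∀ j, c j + d j * t ≤ c k + d k * t := by
  obtain ⟨k, hk⟩ := Finite.exists_max fun j => toLex (d j, c j)
  refine ⟨k, eventually_all.2 fun j => ?_⟩
  rcases Prod.Lex.toLex_le_toLex.1 (hk j) with hslope | ⟨hslope, hintercept⟩
  · filter_upwards [eventually_ge_atTop ((c j - c k) / (d k - d j))] with t ht
    rw [div_le_iff₀ (sub_pos.2 hslope)] at ht
    linarith
  · filter_upwards with t
    rw [show d j = d k from hslope]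
    linarith

theorem exists_eventually_forall_le_affine (c d : ι → 𝕜) :
    ∃ k, ∀ᶠ t in atTop, ∀ j, c k + d k * t ≤ c j + d j * t := by
  obtain ⟨k, hk⟩ := exists_eventually_forall_affine_le (-c) (-d)
  refine ⟨k, hk.mono fun t ht j => ?_⟩
  simpa only [Pi.neg_apply, neg_mul, ← neg_add, neg_le_neg_iff] using ht j

end AffineArgmax

/-- Reduced Shapley operator `T^σ` of a policy `σ` of player Min. -/
noncomputable def reducedOp {n : ℕ} (A : Fin n → Type)
    (B : ∀ i, A i → Type) [∀ i a, Fintype (B i a)] [∀ i a, Nonempty (B i a)]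
    (r : ∀ i, ∀ a : A i, B i a → ℝ) (P : ∀ i, ∀ a : A i, B i a → Fin n → ℝ)
    (σ : ∀ i, A i) : (Fin n → ℝ) → (Fin n → ℝ) :=
  fun x i => ⨆ b : B i (σ i), (r i (σ i) b + ∑ j, P i (σ i) b j * x j)

/-- Dual reduced Shapley operator `{}^τT` of a policy `τ` of player Max. -/
noncomputable def dualReducedOp {n : ℕ} (A : Fin n → Type) [∀ i, Fintype (A i)]
    [∀ i, Nonempty (A i)] (B : ∀ i, A i → Type)
    (r : ∀ i, ∀ a : A i, B i a → ℝ) (P : ∀ i, ∀ a : A i, B i a → Fin n → ℝ)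
    (τ : ∀ i, ∀ a : A i, B i a) : (Fin n → ℝ) → (Fin n → ℝ) :=
  fun x i => ⨅ a : A i, (r i a (τ i a) + ∑ j, P i a (τ i a) j * x j)


section Policies

variable {n : ℕ} {A : Fin n → Type} [∀ i, Fintype (A i)] [∀ i, Nonempty (A i)]
  {B : ∀ i, A i → Type} [∀ i a, Fintype (B i a)] [∀ i a, Nonempty (B i a)]
  {r : ∀ i, ∀ a : A i, B i a → ℝ} {P : ∀ i, ∀ a : A i, B i a → Fin n → ℝ}
  {x : Fin n → ℝ} {σ : ∀ i, A i} {τ : ∀ i, ∀ a : A i, B i a}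

theorem shapleyOp_eq_dualReducedOp
    (hτ : ∀ i a b,
      r i a b + ∑ j, P i a b j * x j ≤ r i a (τ i a) + ∑ j, P i a (τ i a) j * x j) :
    shapleyOp A B r P x = dualReducedOp A B r P τ x := by
  funext i
  refine iInf_congr fun a => ?_
  exact ciSup_eq_of_forall_le_of_forall_lt_exists_gt (hτ i a) fun _ hw => ⟨τ i a, hw⟩

theorem reducedOp_eq_dualReducedOp
    (hτ : ∀ i a b,
      r i a b + ∑ j, P i a b j * x j ≤ r i a (τ i a) + ∑ j, P i a (τ i a) j * x j)
    (hσ : ∀ i a, r i (σ i) (τ i (σ i)) + ∑ j, P i (σ i) (τ i (σ i)) j * x j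
      ≤ r i a (τ i a) + ∑ j, P i a (τ i a) j * x j) :
    reducedOp A B r P σ x = dualReducedOp A B r P τ x := by
  funext i
  have hmax : reducedOp A B r P σ x i
      = r i (σ i) (τ i (σ i)) + ∑ j, P i (σ i) (τ i (σ i)) j * x j :=
    ciSup_eq_of_forall_le_of_forall_lt_exists_gt (hτ i (σ i)) fun _ hw => ⟨τ i (σ i), hw⟩
  have hmin : dualReducedOp A B r P τ x i
      = r i (σ i) (τ i (σ i)) + ∑ j, P i (σ i) (τ i (σ i)) j * x j :=
    ciInf_eq_of_forall_ge_of_forall_gt_exists_lt (hσ i) fun _ hw => ⟨σ i, hw⟩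
  rw [hmax, hmin]

end Policies

theorem payoff_add_smul {n : ℕ} (r : ℝ) (p u ν : Fin n → ℝ) (α : ℝ) :
    r + ∑ j, p j * (u + α • ν) j = (r + ∑ j, p j * u j) + (∑ j, p j * ν j) * α := by
  simp only [Pi.add_apply, Pi.smul_apply, smul_eq_mul, mul_add, Finset.sum_add_distrib,
    Finset.sum_mul]
  rw [add_assoc]
  congr 2
  exact Finset.sum_congr rfl fun j _ => by ring

theorem stmt18_general {n : ℕ}
    (A : Fin n → Type) [∀ i, Fintype (A i)] [∀ i, Nonempty (A i)]
    (B : ∀ i, A i → Type) [∀ i a, Fintype (B i a)] [∀ i a, Nonempty (B i a)]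
    (r : ∀ i, ∀ a : A i, B i a → ℝ) (P : ∀ i, ∀ a : A i, B i a → Fin n → ℝ)
    (T : (Fin n → ℝ) → (Fin n → ℝ)) (hT : T = shapleyOp A B r P)
    (u ν : Fin n → ℝ) (α₀ : ℝ)
    (hhalf : ∀ α ≥ α₀, T (u + α • ν) = u + (α + 1) • ν) :
    ∃ (σstar : ∀ i, A i) (τstar : ∀ i, ∀ a : A i, B i a) (α₁ : ℝ),
      α₀ ≤ α₁ ∧ ∀ α ≥ α₁,
        T (u + α • ν) = reducedOp A B r P σstar (u + α • ν) ∧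
        T (u + α • ν) = dualReducedOp A B r P τstar (u + α • ν) ∧
        T (u + α • ν) = u + (α + 1) • ν := by
  subst hT
  choose τstar hτ using fun i a => exists_eventually_forall_affine_le
    (fun b : B i a => r i a b + ∑ j, P i a b j * u j) (fun b => ∑ j, P i a b j * ν j)
  choose σstar hσ using fun i => exists_eventually_forall_le_affine
    (fun a : A i => r i a (τstar i a) + ∑ j, P i a (τstar i a) j * u j)
    (fun a => ∑ j, P i a (τstar i a) j * ν j)
  obtain ⟨α₁, hα₁⟩ := eventually_atTop.1 <|
    (eventually_all.2 fun i => eventually_all.2 (hτ i)).and (eventually_all.2 hσ)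
  refine ⟨σstar, τstar, max α₀ α₁, le_max_left _ _, fun α hα => ?_⟩
  obtain ⟨hτα, hσα⟩ := hα₁ α (le_of_max_le_right hα)
  simp only [← payoff_add_smul] at hτα hσα
  have hdual := shapleyOp_eq_dualReducedOp hτα
  exact ⟨hdual.trans (reducedOp_eq_dualReducedOp hτα hσα).symm, hdual,
    hhalf α (le_of_max_le_left hα)⟩

/-- along an invariant half-line of `T`, the min and max in the
definition of `T` are ultimately attained by fixed policies `σ*` and `τ*`. -/
theorem stmt18 {n : ℕ} (hn : 0 < n)
    (A : Fin n → Type) [∀ i, Fintype (A i)] [∀ i, Nonempty (A i)]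
    (B : ∀ i, A i → Type) [∀ i a, Fintype (B i a)] [∀ i a, Nonempty (B i a)]
    (r : ∀ i, ∀ a : A i, B i a → ℝ) (P : ∀ i, ∀ a : A i, B i a → Fin n → ℝ)
    (hP : ∀ i a b, (∀ j, 0 ≤ P i a b j) ∧ ∑ j, P i a b j = 1)
    (T : (Fin n → ℝ) → (Fin n → ℝ)) (hT : T = shapleyOp A B r P)
    (u ν : Fin n → ℝ) (α₀ : ℝ)
    (hhalf : ∀ α ≥ α₀, T (u + α • ν) = u + (α + 1) • ν) :
    ∃ (σstar : ∀ i, A i) (τstar : ∀ i, ∀ a : A i, B i a) (α₁ : ℝ),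
      α₀ ≤ α₁ ∧ ∀ α ≥ α₁,
        T (u + α • ν) = reducedOp A B r P σstar (u + α • ν) ∧
        T (u + α • ν) = dualReducedOp A B r P τstar (u + α • ν) ∧
        T (u + α • ν) = u + (α + 1) • ν :=
  stmt18_general A B r P T hT u ν α₀ hhalf
end
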